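/- arXiv:2006.00208 — 6 statements merged into one kernel-verified Lean document; each statement's English description precedes it below -/
import Mathlib

section
/- There exists a rational-type map R on ℂ \ {0}, namely R(z) = 1/z², such that BU(R∘R) = ∅ while BU(R) = {z : 0 < |z| < 1} ∪ {z : |z| > 1}; in particular the inclusion BU(R²) ⊆ BU(R) can be strict. -/
open Filter Topology

def escSet (f : ℂ → ℂ) : Set ℂ :=
  {z | Tendsto (fun n => ‖f^[n] z‖) atTop atTop}

def bddSet (f : ℂ → ℂ) : Set ℂ :=
  {z | ∃ R : ℝ, ∀ n : ℕ, ‖f^[n] z‖ ≤ R}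

def BU (f : ℂ → ℂ) : Set ℂ := (escSet f ∪ bddSet f)ᶜ

theorem BU_inv_sq (R : ℂ → ℂ) (hR : R = fun z => 1 / z ^ 2) :
    BU (R ∘ R) = ∅ ∧
    BU R = {z : ℂ | 0 < ‖z‖ ∧ ‖z‖ < 1} ∪ {z : ℂ | 1 < ‖z‖} := by
  have hR0 : ∀ n : ℕ, R^[n] 0 = 0 := by
    intro n; induction n with
    | zero => simp
    | succ n ih => rw [Function.iterate_succ_apply', ih, hR]; simp
  have hRit : ∀ z : ℂ, z ≠ 0 → ∀ n : ℕ, R^[n] z = z ^ ((-2 : ℤ) ^ n) := by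
    intro z hz n; induction n with
    | zero => simp
    | succ n ih =>
      rw [Function.iterate_succ_apply', ih, hR, pow_succ]
      simp only
      rw [zpow_mul, zpow_neg, one_div]
      norm_cast
  have habs : ∀ z : ℂ, z ≠ 0 → ∀ n : ℕ,
      ‖R^[n] z‖ = ‖z‖ ^ ((-2 : ℤ) ^ n) := by
    intro z hz n
    rw [hRit z hz n, norm_zpow]
  have e1 : ∀ k : ℕ, (-2 : ℤ) ^ (2 * k) = ((4 ^ k : ℕ) : ℤ) := by
    intro k; push_cast; rw [pow_mul]; norm_num
  have e2 : ∀ k : ℕ, (-2 : ℤ) ^ (2 * k + 1) = -((2 * 4 ^ k : ℕ) : ℤ) := by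
    intro k; push_cast; rw [pow_succ, pow_mul]; ring
  have hevenabs : ∀ z : ℂ, z ≠ 0 → ∀ k : ℕ,
      ‖R^[2 * k] z‖ = ‖z‖ ^ (4 ^ k : ℕ) := by
    intro z hz k
    rw [habs z hz, e1, zpow_natCast]
  have hoddabs : ∀ z : ℂ, z ≠ 0 → ∀ k : ℕ,
      ‖R^[2 * k + 1] z‖ = (‖z‖)⁻¹ ^ (2 * 4 ^ k : ℕ) := by
    intro z hz k
    rw [habs z hz, e2, zpow_neg, zpow_natCast, inv_pow]
  have h4 : Tendsto (fun k : ℕ => 4 ^ k) atTop atTop :=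
    tendsto_pow_atTop_atTop_of_one_lt (by norm_num)
  have h24 : Tendsto (fun k : ℕ => 2 * 4 ^ k) atTop atTop :=
    tendsto_atTop_mono (fun k => Nat.le_mul_of_pos_left _ (by norm_num)) h4
  have heven : Tendsto (fun k : ℕ => 2 * k) atTop atTop :=
    tendsto_atTop_mono (fun k => Nat.le_mul_of_pos_left k two_pos) tendsto_id
  have hodd : Tendsto (fun k : ℕ => 2 * k + 1) atTop atTop :=
    tendsto_atTop_mono (fun k => Nat.le_succ_of_le (Nat.le_mul_of_pos_left k two_pos))
      tendsto_id
  constructor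
  · -- BU (R ∘ R) = ∅
    ext z
    simp only [BU, Set.mem_compl_iff, Set.mem_union, Set.mem_empty_iff_false, iff_false,
      not_not]
    have hiter : ∀ n : ℕ, (R ∘ R)^[n] z = R^[2 * n] z := by
      intro n
      rw [Function.iterate_mul, Function.iterate_succ, Function.iterate_one]
    by_cases hz : z = 0
    · right
      exact ⟨0, fun n => by rw [hiter, hz, hR0]; simp⟩
    · by_cases h1 : ‖z‖ ≤ 1
      · right
        refine ⟨1, fun n => ?_⟩
        rw [hiter, hevenabs z hz]
        exact pow_le_one₀ (norm_nonneg z) h1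
      · left
        push_neg at h1
        have : Tendsto (fun n : ℕ => ‖z‖ ^ (4 ^ n : ℕ)) atTop atTop :=
          (tendsto_pow_atTop_atTop_of_one_lt h1).comp h4
        refine this.congr (fun n => ?_)
        rw [hiter, hevenabs z hz]
  · -- BU R
    ext z
    simp only [BU, Set.mem_compl_iff, Set.mem_union, Set.mem_setOf_eq, escSet, bddSet,
      not_or]
    by_cases hz : z = 0
    · refine iff_of_false ?_ ?_
      · rintro ⟨-, h2⟩
        exact h2 ⟨0, fun n => by rw [hz, hR0]; simp⟩
      · rw [hz]
        rintro (⟨h, -⟩ | h) <;> simp at h <;> linarith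
    · have hz0 : 0 < ‖z‖ := by
        simpa [norm_pos_iff] using hz
      rcases lt_trichotomy (‖z‖) 1 with hlt | heq | hgt
      · -- 0 < |z| < 1 : in BU
        have hinv : 1 < (‖z‖)⁻¹ := one_lt_inv₀ hz0 |>.mpr hlt
        refine iff_of_true ⟨?_, ?_⟩ (Or.inl ⟨hz0, hlt⟩)
        · intro h
          have h' := h.comp heven
          have hzero : Tendsto (fun k : ℕ => ‖R^[2 * k] z‖) atTop (nhds 0) := by
            refine Tendsto.congr (fun k => (hevenabs z hz k).symm) ?_
            exact (tendsto_pow_atTop_nhds_zero_of_lt_one hz0.le hlt).comp h4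
          obtain ⟨k, hk1, hk2⟩ :=
            ((h'.eventually_ge_atTop 1).and (hzero.eventually_lt_const one_pos)).exists
          simp only [Function.comp] at hk1
          linarith
        · rintro ⟨M, hM⟩
          have h' : Tendsto (fun k : ℕ => ‖R^[2 * k + 1] z‖) atTop atTop := by
            refine Tendsto.congr (fun k => (hoddabs z hz k).symm) ?_
            exact (tendsto_pow_atTop_atTop_of_one_lt hinv).comp h24
          obtain ⟨k, hk⟩ := (h'.eventually_ge_atTop (M + 1)).exists
          have := hM (2 * k + 1)
          linarith
      · -- |z| = 1 : bounded
        refine iff_of_false ?_ ?_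
        · rintro ⟨-, h2⟩
          exact h2 ⟨1, fun n => by rw [habs z hz, heq, one_zpow]⟩
        · rintro (⟨-, h⟩ | h) <;> linarith
      · -- 1 < |z| : in BU
        have hinv : (‖z‖)⁻¹ < 1 := inv_lt_one_of_one_lt₀ hgt
        have hinv0 : 0 ≤ (‖z‖)⁻¹ := inv_nonneg.mpr hz0.le
        refine iff_of_true ⟨?_, ?_⟩ (Or.inr hgt)
        · intro h
          have h' := h.comp hodd
          have hzero : Tendsto (fun k : ℕ => ‖R^[2 * k + 1] z‖) atTop (nhds 0) := by
            refine Tendsto.congr (fun k => (hoddabs z hz k).symm) ?_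
            exact (tendsto_pow_atTop_nhds_zero_of_lt_one hinv0 hinv).comp h24
          obtain ⟨k, hk1, hk2⟩ :=
            ((h'.eventually_ge_atTop 1).and (hzero.eventually_lt_const one_pos)).exists
          simp only [Function.comp] at hk1
          linarith
        · rintro ⟨M, hM⟩
          have h' : Tendsto (fun k : ℕ => ‖R^[2 * k] z‖) atTop atTop := by
            refine Tendsto.congr (fun k => (hevenabs z hz k).symm) ?_
            exact (tendsto_pow_atTop_atTop_of_one_lt hgt).comp h4
          obtain ⟨k, hk⟩ := (h'.eventually_ge_atTop (M + 1)).exists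
          have := hM (2 * k)
          linarith
end

section
/- Let R(z) = 1/z² and S(z) = z², viewed as self-maps of ℂ \ {0}. Then R and S commute (R∘S = S∘R), BU(S) = ∅, and BU(R) = {z : 0 < |z| < 1} ∪ {z : |z| > 1}. In particular, permutable maps need not have equal bungee sets. -/
open Filter Topology

lemma Siter (z : ℂ) (n : ℕ) : (fun z : ℂ => z ^ 2)^[n] z = z ^ (2 ^ n) := by
  induction n with
  | zero => simp
  | succ n ih =>
    rw [Function.iterate_succ_apply', ih]
    rw [← pow_mul, ← pow_succ]

lemma Riter (z : ℂ) (hz : z ≠ 0) (n : ℕ) :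
    (fun z : ℂ => 1 / z ^ 2)^[n] z = z ^ ((-2 : ℤ) ^ n) := by
  induction n with
  | zero => simp
  | succ n ih =>
    rw [Function.iterate_succ_apply', ih]
    have h : z ^ ((-2 : ℤ) ^ n) ≠ 0 := zpow_ne_zero _ hz
    show 1 / (z ^ ((-2 : ℤ) ^ n)) ^ 2 = z ^ ((-2 : ℤ) ^ (n + 1))
    have e : z ^ ((-2 : ℤ) ^ (n + 1)) = (z ^ ((-2 : ℤ) ^ n)) ^ (-2 : ℤ) := by
      rw [← zpow_mul, ← pow_succ]
    rw [e, zpow_neg]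
    norm_num [zpow_two, sq]

lemma even_exp (a : ℝ) (n : ℕ) (hn : Even n) :
    a ^ ((-2 : ℤ) ^ n) = a ^ (2 ^ n : ℕ) := by
  rw [hn.neg_pow]
  rw [show ((2:ℤ)^n) = ((2^n : ℕ) : ℤ) by push_cast; ring, zpow_natCast]

lemma odd_exp (a : ℝ) (n : ℕ) (hn : Odd n) :
    a ^ ((-2 : ℤ) ^ n) = (a⁻¹) ^ (2 ^ n : ℕ) := by
  rw [hn.neg_pow]
  rw [show ((2:ℤ)^n) = ((2^n : ℕ) : ℤ) by push_cast; ring, zpow_neg, zpow_natCast, inv_pow]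

lemma pow_two_tendsto : Tendsto (fun k : ℕ => 2 ^ k) atTop atTop :=
  tendsto_atTop_mono (fun k => (Nat.lt_two_pow_self (n := k)).le) tendsto_id

example : True := trivial

lemma key (a : ℝ) (ha : 0 < a) (hne : a ≠ 1) :
    ¬ Tendsto (fun n => a ^ ((-2 : ℤ) ^ n)) atTop atTop ∧
    ¬ ∃ M, ∀ n : ℕ, a ^ ((-2 : ℤ) ^ n) ≤ M := by
  rcases lt_or_gt_of_ne hne with h | h
  · have hb : 1 < a⁻¹ := one_lt_inv_iff₀.2 ⟨ha, h⟩
    constructor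
    · intro ht
      obtain ⟨N, hN⟩ := eventually_atTop.1 (ht.eventually_ge_atTop 2)
      have h2 := hN (2 * N) (by omega)
      rw [even_exp a _ ⟨N, two_mul N⟩] at h2
      have hle : a ^ (2 ^ (2 * N) : ℕ) ≤ 1 := pow_le_one₀ ha.le h.le
      linarith
    · rintro ⟨M, hM⟩
      have h1 : Tendsto (fun k : ℕ => (a⁻¹) ^ (2 ^ (2 * k + 1) : ℕ)) atTop atTop :=
        (tendsto_pow_atTop_atTop_of_one_lt hb).comp
          (tendsto_atTop_mono (f := fun k : ℕ => k)
            (fun k => le_trans (by show k ≤ 2 * k + 1; omega) (Nat.lt_two_pow_self (n := 2 * k + 1)).le) tendsto_id)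
      obtain ⟨k, hk⟩ := (h1.eventually_gt_atTop M).exists
      have h2 := hM (2 * k + 1)
      rw [odd_exp a _ ⟨k, rfl⟩] at h2
      exact absurd h2 (not_le.2 hk)
  · constructor
    · intro ht
      obtain ⟨N, hN⟩ := eventually_atTop.1 (ht.eventually_ge_atTop 2)
      have h2 := hN (2 * N + 1) (by omega)
      rw [odd_exp a _ ⟨N, rfl⟩] at h2
      have hle : (a⁻¹) ^ (2 ^ (2 * N + 1) : ℕ) ≤ 1 :=
        pow_le_one₀ (inv_nonneg.2 ha.le) (inv_le_one_of_one_le₀ h.le)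
      linarith
    · rintro ⟨M, hM⟩
      have h1 : Tendsto (fun k : ℕ => a ^ (2 ^ (2 * k) : ℕ)) atTop atTop :=
        (tendsto_pow_atTop_atTop_of_one_lt h).comp
          (tendsto_atTop_mono (f := fun k : ℕ => k)
            (fun k => le_trans (by show k ≤ 2 * k; omega) (Nat.lt_two_pow_self (n := 2 * k)).le) tendsto_id)
      obtain ⟨k, hk⟩ := (h1.eventually_gt_atTop M).exists
      have h2 := hM (2 * k)
      rw [even_exp a _ ⟨k, two_mul k⟩] at h2
      exact absurd h2 (not_le.2 hk)

theorem permutable_unequal_BU (R S : ℂ → ℂ)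
    (hR : R = fun z => 1 / z ^ 2) (hS : S = fun z => z ^ 2) :
    R ∘ S = S ∘ R ∧ BU S = ∅ ∧
    BU R = {z : ℂ | 0 < ‖z‖ ∧ ‖z‖ < 1} ∪ {z : ℂ | 1 < ‖z‖} := by
  subst hR hS
  refine ⟨?_, ?_, ?_⟩
  · funext z
    simp only [Function.comp_apply]
    ring
  · ext z
    simp only [BU, Set.mem_compl_iff, Set.mem_union, Set.mem_empty_iff_false, iff_false,
      not_not]
    rcases le_or_gt ‖z‖ 1 with h | h
    · right
      exact ⟨1, fun n => by rw [Siter, norm_pow]; exact pow_le_one₀ (norm_nonneg z) h⟩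
    · left
      have h1 : Tendsto (fun m : ℕ => ‖z‖ ^ m) atTop atTop :=
        tendsto_pow_atTop_atTop_of_one_lt h
      have h2 := h1.comp pow_two_tendsto
      refine h2.congr fun n => ?_
      simp [Function.comp, Siter, norm_pow]
  · ext z
    simp only [BU, Set.mem_compl_iff, Set.mem_union, Set.mem_setOf_eq, escSet, bddSet,
      Set.mem_setOf_eq]
    by_cases hz : z = 0
    · subst hz
      have h0 : ∀ n : ℕ, (fun z : ℂ => 1 / z ^ 2)^[n] 0 = 0 := fun n =>
        Function.iterate_fixed (by simp) n
      simp only [h0, norm_zero]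
      constructor
      · intro h
        exact absurd (Or.inr ⟨0, fun n => le_refl 0⟩) h
      · rintro (⟨h, _⟩ | h) <;> exact absurd h (by norm_num)
    · have habs : ∀ n : ℕ, ‖(fun z : ℂ => 1 / z ^ 2)^[n] z‖
          = ‖z‖ ^ ((-2 : ℤ) ^ n) := fun n => by
        rw [Riter z hz, norm_zpow]
      have ha : 0 < ‖z‖ := norm_pos_iff.2 hz
      simp only [habs]
      by_cases h1 : ‖z‖ = 1
      · simp only [h1, one_zpow, ha]
        constructor
        · intro h; exact absurd (Or.inr ⟨1, fun n => le_refl 1⟩) h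
        · rintro (⟨_, hlt⟩ | hgt) <;> linarith
      · obtain ⟨hne, hnb⟩ := key ‖z‖ ha h1
        constructor
        · intro _
          rcases lt_or_gt_of_ne h1 with hlt | hgt
          · exact Or.inl ⟨ha, hlt⟩
          · exact Or.inr hgt
        · intro _
          rintro (h | h)
          · exact hne h
          · exact hnb h
end

section
/- Let f, g : ℂ → ℂ be commuting continuous functions and suppose there is a polynomial P of degree ≥ 2 with P∘f = f∘g. If U ⊆ BU(f) then g⁻¹(U) ⊆ BU(f): every point z₀ with g(z₀) ∈ U has an orbit under f that is neither bounded nor tends to ∞. -/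
open Filter Topology

theorem preimage_BU_subset_BU (f g : ℂ → ℂ) (hf : Continuous f) (hg : Continuous g)
    (hcomm : f ∘ g = g ∘ f) (P : Polynomial ℂ) (hdeg : 2 ≤ P.natDegree)
    (hPf : ∀ z, P.eval (f z) = f (g z)) (U : Set ℂ) (hU : U ⊆ BU f) :
    g ⁻¹' U ⊆ BU f := by
  intro z hz
  have hgz : g z ∈ BU f := hU hz
  simp only [BU, Set.mem_compl_iff, Set.mem_union, not_or] at hgz ⊢
  have hc : Function.Commute f g := funext_iff.mp hcomm
  have hiter : ∀ n : ℕ, f^[n] (g z) = g (f^[n] z) := fun n => (hc.iterate_left n) z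
  constructor
  · -- if z escapes, then g z escapes via P
    intro hesc
    apply hgz.1
    have key : ∀ n : ℕ, f^[n + 1] (g z) = P.eval (f^[n + 1] z) := by
      intro n
      rw [Function.iterate_succ_apply', hiter, ← hPf, Function.iterate_succ_apply' f n z]
    have hdegpos : 0 < P.degree := by
      have : P.natDegree ≠ 0 := by omega
      exact Polynomial.natDegree_pos_iff_degree_pos.mp (Nat.pos_of_ne_zero this)
    have hP : Tendsto (fun n : ℕ => ‖P.eval (f^[n] z)‖) atTop atTop := by
      have := P.tendsto_norm_atTop hdegpos (l := atTop) (z := fun n : ℕ => f^[n] z)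
        (by simpa [escSet] using hesc)
      simpa using this
    rw [escSet, Set.mem_setOf_eq, ← tendsto_add_atTop_iff_nat 1]
    exact (hP.comp (tendsto_add_atTop_nat 1)).congr fun n => by
      simp only [Function.comp]; rw [← key n]
  · -- if z has bounded orbit, then g z has bounded orbit
    rintro ⟨R, hR⟩
    apply hgz.2
    obtain ⟨M, hM⟩ : ∃ M : ℝ, ∀ w ∈ Metric.closedBall (0 : ℂ) R, ‖g w‖ ≤ M := by
      have hcpt : IsCompact (Metric.closedBall (0 : ℂ) R) := isCompact_closedBall 0 R
      obtain ⟨M, hM⟩ := (hcpt.image hg).isBounded.subset_closedBall 0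
      exact ⟨M, fun w hw => by
        have := hM (Set.mem_image_of_mem g hw)
        simpa [Complex.dist_eq] using this⟩
    refine ⟨M, fun n => ?_⟩
    rw [hiter n]
    apply hM
    simpa [Metric.mem_closedBall, Complex.dist_eq] using hR n
end

section
/- Let f, g, h : ℂ → ℂ be continuous with f∘g = g∘f, and let P be a polynomial of degree ≥ 2 such that P∘f = h∘g. Let z₀ ∈ BU(f), and let D be a bounded set containing the points f^[n_k](z₀) of a bounded subsequence of the orbit of z₀. Then the forward f-orbit of g(D) is not uniformly bounded: there is no constant A with |f^[n](w)| ≤ A for all w ∈ g(D) and all n ∈ ℕ. -/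
open Filter Topology

lemma bdd_of_tail (u : ℕ → ℝ) (N : ℕ) (R : ℝ) (h : ∀ m, u (m + N) ≤ R) :
    ∃ A, ∀ m, u m ≤ A := by
  refine ⟨R ⊔ (Finset.range (N + 1)).sup' (by simp) u, fun m => ?_⟩
  rcases le_or_gt N m with hm | hm
  · calc u m = u ((m - N) + N) := by rw [Nat.sub_add_cancel hm]
    _ ≤ R := h _
    _ ≤ _ := le_sup_left
  · exact le_sup_of_le_right <| Finset.le_sup' u (Finset.mem_range.2 (by omega))

theorem image_disk_orbit_unbounded (f g h : ℂ → ℂ)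
    (hf : Continuous f) (hg : Continuous g) (hh : Continuous h)
    (hcomm : f ∘ g = g ∘ f) (P : Polynomial ℂ) (hdeg : 2 ≤ P.natDegree)
    (hPf : ∀ z, P.eval (f z) = h (g z))
    (z₀ : ℂ) (hz₀ : z₀ ∈ BU f)
    (D : Set ℂ) (hD : Bornology.IsBounded D)
    (n : ℕ → ℕ) (hn : StrictMono n) (hnD : ∀ k, f^[n k] z₀ ∈ D) :
    ¬ ∃ A : ℝ, ∀ w ∈ D, ∀ m : ℕ, ‖f^[m] (g w)‖ ≤ A := by
  rintro ⟨A, hA⟩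
  have hc : Function.Commute f g := fun x => congrFun hcomm x
  have hcN : ∀ m z, f^[m] (g z) = g (f^[m] z) := fun m z =>
    (hc.iterate_left m) z
  -- the orbit of g z₀ is bounded
  have htail : ∀ m, ‖f^[m + n 0] (g z₀)‖ ≤ A := by
    intro m
    have h1 := hA _ (hnD 0) m
    rw [Function.iterate_add_apply, hcN (n 0) z₀]
    exact h1
  obtain ⟨R, hR⟩ := bdd_of_tail (fun m => ‖f^[m] (g z₀)‖) (n 0) A htail
  -- h is bounded on the closed ball of radius R
  obtain ⟨B, hB⟩ := (isCompact_closedBall (0 : ℂ) R).exists_bound_of_continuousOn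
    hh.continuousOn
  -- hence P ∘ f^[m+1] z₀ is bounded
  have hPb : ∀ m, ‖P.eval (f^[m + 1] z₀)‖ ≤ B := by
    intro m
    have : f^[m + 1] z₀ = f (f^[m] z₀) := by
      rw [Function.iterate_succ_apply']
    rw [this, hPf, ← hcN]
    exact hB _ (Metric.mem_closedBall.2 (by simpa [Complex.dist_eq] using hR m))
  -- |P z| → ∞ as |z| → ∞, so the orbit of z₀ is bounded
  have hdeg' : 0 < P.degree := by
    have : P.natDegree ≠ 0 := by omega
    exact Polynomial.natDegree_pos_iff_degree_pos.mp (by omega)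
  have htend : Tendsto (fun z : ℂ => ‖P.eval z‖) (Filter.comap norm atTop) atTop :=
    P.tendsto_norm_atTop hdeg' tendsto_comap
  have hev := htend.eventually (eventually_gt_atTop B)
  rw [Filter.eventually_comap] at hev
  obtain ⟨C, hC⟩ := Filter.eventually_atTop.mp hev
  have horb : ∀ m, ‖f^[m + 1] z₀‖ ≤ C := by
    intro m
    by_contra hlt
    push_neg at hlt
    exact absurd (hPb m) (not_le.2 (hC _ (le_of_lt (by simpa using hlt)) _ rfl))
  obtain ⟨A', hA'⟩ := bdd_of_tail (fun m => ‖f^[m] z₀‖) 1 C horb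
  exact hz₀ (Set.mem_union_right _ ⟨A', hA'⟩)
end

section
/- Let f, g, h : ℂ → ℂ be continuous with f∘g = g∘f, and let P be a polynomial of degree ≥ 2 with P∘f = h∘g. If z₀ ∈ BU(f) and w₀ satisfies g(w₀) = z₀, then w₀ ∈ BU(f): the orbit (f^[n](w₀)) is neither bounded nor tends to ∞. -/
open Filter Topology

theorem preimage_point_in_BU (f g h : ℂ → ℂ)
    (hf : Continuous f) (hg : Continuous g) (hh : Continuous h)
    (hcomm : f ∘ g = g ∘ f) (P : Polynomial ℂ) (hdeg : 2 ≤ P.natDegree)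
    (hPf : ∀ z, P.eval (f z) = h (g z))
    (z₀ w₀ : ℂ) (hz₀ : z₀ ∈ BU f) (hw₀ : g w₀ = z₀) :
    w₀ ∈ BU f := by
  have hC : Function.Commute f g := funext_iff.mp hcomm
  have hiter : ∀ n : ℕ, f^[n] z₀ = g (f^[n] w₀) := by
    intro n
    rw [← hw₀]
    exact ((hC.symm.iterate_right n).eq w₀).symm
  intro hmem
  apply hz₀
  rcases hmem with hesc | hbdd
  · -- w₀ escaping ⇒ z₀ escaping
    left
    have hP0 : (0 : WithBot ℕ) < P.degree := by
      rw [Polynomial.degree_eq_natDegree (fun h0 => by simp [h0] at hdeg)]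
      exact_mod_cast Nat.lt_of_lt_of_le (by norm_num) hdeg
    rw [escSet, Set.mem_setOf_eq, tendsto_atTop]
    intro M
    -- bound for h on closed ball of radius M
    obtain ⟨C, hCb⟩ : ∃ C, ∀ z ∈ Metric.closedBall (0:ℂ) (max M 0),
        ‖h z‖ ≤ C := by
      rcases (isCompact_closedBall (0:ℂ) (max M 0)).exists_bound_of_continuousOn
          (hh.comp_continuousOn continuousOn_id).norm with ⟨C, hC'⟩
      exact ⟨C, fun z hz => by simpa using hC' z hz⟩
    -- |f^[n+1] w₀| → ∞, so |P(f^[n+1] w₀)| → ∞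
    have h1 : Tendsto (fun n => ‖f^[n+1] w₀‖) atTop atTop :=
      hesc.comp (tendsto_add_atTop_nat 1)
    have h2 : Tendsto (fun n => ‖P.eval (f^[n+1] w₀)‖) atTop atTop :=
      P.tendsto_norm_atTop hP0 h1
    filter_upwards [h2.eventually_ge_atTop (C + 1)] with n hn
    rw [hiter n]
    by_contra hlt
    push_neg at hlt
    have hzball : g (f^[n] w₀) ∈ Metric.closedBall (0:ℂ) (max M 0) := by
      simp only [Metric.mem_closedBall, dist_zero_right]
      exact le_trans hlt.le (le_max_left _ _)
    have h3 : ‖h (g (f^[n] w₀))‖ ≤ C := by simpa using hCb _ hzball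
    have heq : P.eval (f^[n+1] w₀) = h (g (f^[n] w₀)) := by
      rw [Function.iterate_succ_apply', hPf]
    rw [heq] at hn
    linarith
  · -- w₀ bounded ⇒ z₀ bounded
    right
    obtain ⟨R, hR⟩ := hbdd
    have hR0 : (0:ℝ) ≤ R := le_trans (norm_nonneg _) (hR 0)
    obtain ⟨C, hCb⟩ : ∃ C, ∀ z ∈ Metric.closedBall (0:ℂ) R,
        ‖g z‖ ≤ C := by
      rcases (isCompact_closedBall (0:ℂ) R).exists_bound_of_continuousOn
          (hg.comp_continuousOn continuousOn_id).norm with ⟨C, hC'⟩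
      exact ⟨C, fun z hz => by simpa using hC' z hz⟩
    refine ⟨C, fun n => ?_⟩
    rw [hiter n]
    exact hCb _ (by simpa [Metric.mem_closedBall, dist_zero_right] using hR n)
end

section
/- Let f, g : ℂ → ℂ with g continuous. If z₀ ∈ BU(f∘g), then g(z₀) ∈ BU(g∘f). That is: if the orbit of z₀ under f∘g is neither bounded nor tends to ∞, then the orbit of g(z₀) under g∘f is neither bounded nor tends to ∞. -/
open Filter Topology

lemma semiconj_iter (f g : ℂ → ℂ) (n : ℕ) (z : ℂ) :
    (g ∘ f)^[n] (g z) = g ((f ∘ g)^[n] z) := by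
  have h : Function.Semiconj g (f ∘ g) (g ∘ f) := fun x => rfl
  exact ((h.iterate_right n) z).symm

lemma bound_on_ball (h : ℂ → ℂ) (hh : Continuous h) (R : ℝ) :
    ∃ C, ∀ w : ℂ, ‖w‖ ≤ R → ‖h w‖ ≤ C := by
  obtain ⟨C, hC⟩ := (isCompact_closedBall (0 : ℂ) R).exists_bound_of_continuousOn
    hh.continuousOn
  exact ⟨C, fun w hw => by
    have := hC w (by simpa [Metric.mem_closedBall, Complex.dist_eq] using hw)
    simpa using this⟩

theorem BU_comp_transfer (f g : ℂ → ℂ) (hf : Continuous f) (hg : Continuous g)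
    (z₀ : ℂ) (hz₀ : z₀ ∈ BU (f ∘ g)) :
    g z₀ ∈ BU (g ∘ f) := by
  intro h
  apply hz₀
  rcases h with h | h
  · -- g z₀ escapes under g∘f ⇒ z₀ escapes under f∘g
    left
    simp only [escSet, Set.mem_setOf_eq] at h ⊢
    have h' : Tendsto (fun n => ‖g ((f ∘ g)^[n] z₀)‖) atTop atTop := by
      refine h.congr fun n => ?_
      rw [semiconj_iter]
    by_contra hnot
    rw [tendsto_atTop_atTop] at hnot
    push_neg at hnot
    obtain ⟨M, hM⟩ := hnot
    obtain ⟨C, hC⟩ := bound_on_ball g hg M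
    have hfreq : ∃ᶠ n in atTop, ‖g ((f ∘ g)^[n] z₀)‖ ≤ C := by
      rw [frequently_atTop]
      intro a
      obtain ⟨b, hb, hb2⟩ := hM a
      exact ⟨b, hb, hC _ hb2.le⟩
    have hev : ∀ᶠ n in atTop, C + 1 ≤ ‖g ((f ∘ g)^[n] z₀)‖ :=
      h'.eventually_ge_atTop (C + 1)
    obtain ⟨n, hn1, hn2⟩ := (hfreq.and_eventually hev).exists
    linarith
  · -- orbit of g z₀ bounded ⇒ orbit of z₀ bounded
    right
    obtain ⟨R, hR⟩ := h
    obtain ⟨C, hC⟩ := bound_on_ball f hf R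
    refine ⟨max C ‖z₀‖, fun n => ?_⟩
    cases n with
    | zero => simp
    | succ n =>
      have : (f ∘ g)^[n + 1] z₀ = f ((g ∘ f)^[n] (g z₀)) := by
        rw [Function.iterate_succ_apply', semiconj_iter]
        rfl
      rw [this]
      exact le_max_of_le_left (hC _ (hR n))
end
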